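/- arXiv:0903.1486 — 3 statements merged into one kernel-verified Lean document; each statement's English description precedes it below -/
import Mathlib

section
/- No nontrivial proper subspace of L²(A) is invariant under all the Weyl operators W_k for k ∈ K; i.e., the Heisenberg group acts irreducibly on L²(A). -/
/-!
Modulations `W_{(0,χ)}` multiply by characters, and on a finite abelian group the characters span
all functions, so an invariant subspace `V` is an ideal of the ring `A → ℂ`. A nonzero ideal
contains an indicator `δ_a`, whose translates `W_{(b-a,1)} δ_a = δ_b` span everything.
-/

noncomputable section

/-- Weyl operator `W_{(x,χ)} = T_x M_χ` on `L²(A) = (A → ℂ)`. -/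
def Weyl {A : Type*} [AddCommGroup A] (k : A × AddChar A Circle) :
    Module.End ℂ (A → ℂ) where
  toFun f := fun u => (k.2 (u - k.1) : ℂ) * f (u - k.1)
  map_add' f g := by funext u; simp [mul_add]
  map_smul' c f := by funext u; simp [smul_eq_mul]; ring

section Weyl

variable {A : Type*} [AddCommGroup A]

@[simp]
lemma Weyl_apply (k : A × AddChar A Circle) (f : A → ℂ) (u : A) :
    Weyl k f u = (k.2 (u - k.1) : ℂ) * f (u - k.1) := rfl

lemma Weyl_zero_circleEquivComplex_symm [Finite A] (ψ : AddChar A ℂ) (f : A → ℂ) :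
    Weyl (0, AddChar.circleEquivComplex.symm ψ) f = ⇑ψ * f := by
  funext u
  simp only [Weyl_apply, sub_zero]
  rfl

lemma Weyl_one_snd_single [DecidableEq A] (x a : A) :
    Weyl (x, 1) (Pi.single a 1) = Pi.single (a + x) 1 := by
  funext u
  simp only [Weyl_apply, AddChar.one_apply, Circle.coe_one, one_mul, Pi.single_apply,
    sub_eq_iff_eq_add]

end Weyl

lemma Submodule.mul_mem_of_span_eq_top {R S : Type*} [CommSemiring R] [Semiring S] [Algebra R S]
    (V : Submodule R S) {s : Set S} (hs : span R s = ⊤) (hV : ∀ g ∈ s, ∀ f ∈ V, g * f ∈ V)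
    (g : S) {f : S} (hf : f ∈ V) : g * f ∈ V := by
  have hg : g ∈ span R s := hs ▸ mem_top
  induction hg using span_induction with
  | mem g hg => exact hV g hg f hf
  | zero => simp
  | add g h _ _ hg hh => simpa [add_mul] using V.add_mem hg hh
  | smul c g _ hg => simpa [smul_mul_assoc] using V.smul_mem c hg

section Pi

variable {ι K : Type*} [Field K] [DecidableEq ι] (V : Submodule K (ι → K))

lemma Submodule.exists_single_one_mem_of_mul_mem (hV : ∀ g, ∀ f ∈ V, g * f ∈ V) (hne : V ≠ ⊥) :
    ∃ a, Pi.single a 1 ∈ V := by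
  obtain ⟨f, hfV, hf⟩ := V.exists_mem_ne_zero_of_ne_bot hne
  obtain ⟨a, ha⟩ := Function.ne_iff.mp hf
  refine ⟨a, ?_⟩
  have hsingle : Pi.single a (f a)⁻¹ * f = Pi.single a 1 := by
    rw [← Pi.single_mul_left, inv_mul_cancel₀ ha]
  exact hsingle ▸ hV _ f hfV

lemma Submodule.eq_top_of_forall_single_one_mem [Finite ι] (hV : ∀ a, Pi.single a 1 ∈ V) :
    V = ⊤ := by
  rw [eq_top_iff, ← (Pi.basisFun K ι).span_eq, span_le]
  rintro _ ⟨a, rfl⟩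
  simpa using hV a

end Pi

theorem weyl_irreducible (A : Type*) [AddCommGroup A] [Fintype A]
    (V : Submodule ℂ (A → ℂ))
    (hV : ∀ k : A × AddChar A Circle, ∀ f ∈ V, Weyl k f ∈ V) :
    V = ⊥ ∨ V = ⊤ := by
  classical
  refine or_iff_not_imp_left.mpr fun hne => ?_
  have hmul : ∀ g, ∀ f ∈ V, g * f ∈ V := by
    refine V.mul_mem_of_span_eq_top (AddChar.complexBasis A).span_eq ?_
    rintro _ ⟨ψ, rfl⟩ f hf
    simpa [Weyl_zero_circleEquivComplex_symm] using hV (0, AddChar.circleEquivComplex.symm ψ) f hf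
  obtain ⟨a, ha⟩ := V.exists_single_one_mem_of_mul_mem hmul hne
  refine V.eq_top_of_forall_single_one_mem fun b => ?_
  simpa [Weyl_one_snd_single] using hV (b - a, 1) _ ha
end
end

section
/- Let p be an odd prime, n, g ≥ 1, A = (ℤ/pⁿℤ)^g, K = (ℤ/pⁿℤ)^{2g} with the standard symplectic form. The symplectic group Sp_{2g}(ℤ/pⁿℤ) acting on K has exactly n+1 orbits, with representatives (p^r e₁, 0) for r = 0,…,n; the orbit of (p^r e₁,0) consists of all vectors all of whose entries are divisible by p^r but not all divisible by p^{r+1}. -/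
/-!
Symplectic transvections `w ↦ w + c⟨w, v⟩ v` act transitively on the primitive vectors (those
with an entry prime to `p`): if `⟨u, w⟩` is a unit, the transvection along `w - u` sends `u` to
`w`, and because the nonunits of `ℤ/pⁿℤ` are closed under addition, any two primitive vectors pair
to units with a common third vector. Every vector is `p^r • u` with `u` primitive, and additive
automorphisms are `ℤ/pⁿℤ`-linear, so the exact power of `p` dividing a vector is an orbit invariant
and classifies the orbits.
-/

noncomputable section

variable (p n g : ℕ)

/-- `K = (ℤ/pⁿℤ)^g × (ℤ/pⁿℤ)^g`. -/
abbrev Ksymp := (Fin g → ZMod (p ^ n)) × (Fin g → ZMod (p ^ n))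

/-- The standard symplectic form `((x,y),(x',y')) ↦ x·y' − x'·y`. -/
def sympForm (k l : Ksymp p n g) : ZMod (p ^ n) :=
  (∑ i, k.1 i * l.2 i) - ∑ i, l.1 i * k.2 i

/-- `α` is a symplectic automorphism, i.e. an element of `Sp_{2g}(ℤ/pⁿℤ)`
viewed as an automorphism of `K` preserving the symplectic form. -/
def IsSymp (α : AddAut (Ksymp p n g)) : Prop :=
  ∀ a b : Ksymp p n g, sympForm p n g (α a) (α b) = sympForm p n g a b

/-- `k` and `l` lie in the same `Sp_{2g}(ℤ/pⁿℤ)`-orbit. -/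
def InOrbit (k l : Ksymp p n g) : Prop :=
  ∃ α : AddAut (Ksymp p n g), IsSymp p n g α ∧ α k = l

/-- The representative `(p^r e₁, 0)`. -/
def orbitRep (r : ℕ) : Ksymp p n g :=
  (fun i => if (i : ℕ) = 0 then (p : ZMod (p ^ n)) ^ r else 0, 0)

/-- All entries of `k` are divisible by `p^r`. -/
def DivBy (r : ℕ) (k : Ksymp p n g) : Prop :=
  (∀ i, (p : ZMod (p ^ n)) ^ r ∣ k.1 i) ∧ (∀ i, (p : ZMod (p ^ n)) ^ r ∣ k.2 i)

section

variable {p n g}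

lemma ZMod.isUnit_iff_not_prime_dvd (hp : p.Prime) (hn : n ≠ 0) (x : ZMod (p ^ n)) :
    IsUnit x ↔ ¬(p : ZMod (p ^ n)) ∣ x := by
  have : NeZero (p ^ n) := ⟨pow_ne_zero n hp.ne_zero⟩
  refine ⟨fun hx hdvd => ZMod.prime_natCast_not_isUnit_pow hp (Nat.pos_of_ne_zero hn)
    (isUnit_of_dvd_unit hdvd hx), fun h => ?_⟩
  rw [← ZMod.natCast_zmod_val x, ZMod.isUnit_natCast_iff_not_dvd_pow hp (Nat.pos_of_ne_zero hn)]
  exact fun hdvd => h (by simpa using Nat.cast_dvd_cast (α := ZMod (p ^ n)) hdvd)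

lemma ZMod.isUnit_add_of_not_isUnit (hp : p.Prime) (hn : n ≠ 0) {a b : ZMod (p ^ n)}
    (ha : IsUnit a) (hb : ¬IsUnit b) : IsUnit (a + b) := by
  rw [ZMod.isUnit_iff_not_prime_dvd hp hn] at ha ⊢
  rw [ZMod.isUnit_iff_not_prime_dvd hp hn, not_not] at hb
  exact fun hab => ha ((dvd_add_left hb).mp hab)

lemma ZMod.le_of_prime_pow_dvd_pow (hp : p.Prime) {a b : ℕ} (hb : b < n)
    (h : (p : ZMod (p ^ n)) ^ a ∣ (p : ZMod (p ^ n)) ^ b) : a ≤ b := by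
  by_contra! hba
  obtain ⟨c, hc⟩ := (pow_dvd_pow _ hba).trans h
  have hzero : ((p ^ (n - 1) : ℕ) : ZMod (p ^ n)) = 0 := by
    calc ((p ^ (n - 1) : ℕ) : ZMod (p ^ n))
        = (p : ZMod (p ^ n)) ^ (n - 1 - b) * (p : ZMod (p ^ n)) ^ b := by
          rw [← pow_add, Nat.cast_pow, Nat.sub_add_cancel (by omega)]
      _ = ((p ^ n : ℕ) : ZMod (p ^ n)) * c := by
          rw [hc, ← mul_assoc, ← pow_add, Nat.cast_pow]
          congr 2
          omega
      _ = 0 := by rw [ZMod.natCast_self, zero_mul]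
  rw [ZMod.natCast_eq_zero_iff, Nat.pow_dvd_pow_iff_le_right hp.one_lt] at hzero
  omega

lemma sympForm_eq_dotProduct (k l : Ksymp p n g) :
    sympForm p n g k l = k.1 ⬝ᵥ l.2 - l.1 ⬝ᵥ k.2 := rfl

lemma sympForm_add_left (k k' l : Ksymp p n g) :
    sympForm p n g (k + k') l = sympForm p n g k l + sympForm p n g k' l := by
  simp only [sympForm_eq_dotProduct, Prod.fst_add, Prod.snd_add, add_dotProduct,
    dotProduct_add]
  ring

lemma sympForm_add_right (k l l' : Ksymp p n g) :
    sympForm p n g k (l + l') = sympForm p n g k l + sympForm p n g k l' := by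
  simp only [sympForm_eq_dotProduct, Prod.fst_add, Prod.snd_add, add_dotProduct,
    dotProduct_add]
  ring

lemma sympForm_smul_left (c : ZMod (p ^ n)) (k l : Ksymp p n g) :
    sympForm p n g (c • k) l = c * sympForm p n g k l := by
  simp only [sympForm_eq_dotProduct, Prod.smul_fst, Prod.smul_snd, smul_dotProduct,
    dotProduct_smul, smul_eq_mul]
  ring

lemma sympForm_smul_right (c : ZMod (p ^ n)) (k l : Ksymp p n g) :
    sympForm p n g k (c • l) = c * sympForm p n g k l := by
  simp only [sympForm_eq_dotProduct, Prod.smul_fst, Prod.smul_snd, smul_dotProduct,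
    dotProduct_smul, smul_eq_mul]
  ring

lemma sympForm_self (k : Ksymp p n g) : sympForm p n g k k = 0 :=
  sub_self _

lemma sympForm_swap (k l : Ksymp p n g) :
    sympForm p n g l k = -sympForm p n g k l :=
  (neg_sub _ _).symm

lemma sympForm_sub_right (k l l' : Ksymp p n g) :
    sympForm p n g k (l - l') = sympForm p n g k l - sympForm p n g k l' := by
  simp only [sympForm_eq_dotProduct, Prod.fst_sub, Prod.snd_sub, sub_dotProduct,
    dotProduct_sub]
  ring

lemma sympForm_add_smul_self_left (w v : Ksymp p n g) (t : ZMod (p ^ n)) :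
    sympForm p n g (w + t • v) v = sympForm p n g w v := by
  rw [sympForm_add_left, sympForm_smul_left, sympForm_self, mul_zero, add_zero]

def transvection (v : Ksymp p n g) (c : ZMod (p ^ n)) : AddAut (Ksymp p n g) where
  toFun w := w + (c * sympForm p n g w v) • v
  invFun w := w + (-c * sympForm p n g w v) • v
  left_inv w := by
    simp only [sympForm_add_smul_self_left, add_assoc, ← add_smul, neg_mul, add_neg_cancel,
      zero_smul, add_zero]
  right_inv w := by
    simp only [sympForm_add_smul_self_left, add_assoc, ← add_smul, neg_mul, neg_add_cancel,
      zero_smul, add_zero]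
  map_add' w w' := by
    simp only [sympForm_add_left, mul_add, add_smul]
    abel

lemma transvection_apply (v : Ksymp p n g) (c : ZMod (p ^ n)) (w : Ksymp p n g) :
    transvection v c w = w + (c * sympForm p n g w v) • v := rfl

lemma isSymp_transvection (v : Ksymp p n g) (c : ZMod (p ^ n)) :
    IsSymp p n g (transvection v c) := by
  intro a b
  simp only [transvection_apply, sympForm_add_left, sympForm_add_right, sympForm_smul_left,
    sympForm_smul_right, sympForm_self, sympForm_swap v b]
  ring

lemma InOrbit.refl (k : Ksymp p n g) : InOrbit p n g k k :=
  ⟨AddEquiv.refl _, fun _ _ => rfl, rfl⟩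

lemma InOrbit.symm {k l : Ksymp p n g} (h : InOrbit p n g k l) : InOrbit p n g l k := by
  obtain ⟨α, hα, rfl⟩ := h
  refine ⟨α.symm, fun a b => ?_, α.symm_apply_apply k⟩
  simpa using (hα (α.symm a) (α.symm b)).symm

lemma InOrbit.trans {k l m : Ksymp p n g} (h : InOrbit p n g k l)
    (h' : InOrbit p n g l m) : InOrbit p n g k m := by
  obtain ⟨α, hα, rfl⟩ := h
  obtain ⟨β, hβ, rfl⟩ := h'
  exact ⟨α.trans β, fun a b => (hβ _ _).trans (hα a b), rfl⟩

lemma InOrbit.smul {u w : Ksymp p n g} (c : ZMod (p ^ n)) (h : InOrbit p n g u w) :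
    InOrbit p n g (c • u) (c • w) := by
  obtain ⟨α, hα, rfl⟩ := h
  exact ⟨α, hα, ZMod.map_smul α c u⟩

lemma inOrbit_of_isUnit_sympForm {u w : Ksymp p n g} (h : IsUnit (sympForm p n g u w)) :
    InOrbit p n g u w := by
  refine ⟨transvection (w - u) ↑(h.unit⁻¹), isSymp_transvection _ _, ?_⟩
  rw [transvection_apply, sympForm_sub_right, sympForm_self, sub_zero, h.val_inv_mul,
    one_smul, add_sub_cancel]

lemma exists_isUnit_sympForm (hp : p.Prime) (hn : n ≠ 0) {k : Ksymp p n g}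
    (hk : ¬DivBy p n g 1 k) : ∃ l, IsUnit (sympForm p n g k l) := by
  simp only [DivBy, pow_one, not_and_or, not_forall, ← ZMod.isUnit_iff_not_prime_dvd hp hn] at hk
  rcases hk with ⟨i, hi⟩ | ⟨i, hi⟩
  · refine ⟨(0, Pi.single i 1), ?_⟩
    simpa [sympForm_eq_dotProduct] using hi
  · refine ⟨(Pi.single i 1, 0), ?_⟩
    simpa [sympForm_eq_dotProduct] using hi.neg

lemma inOrbit_of_not_divBy_one (hp : p.Prime) (hn : n ≠ 0) {u w : Ksymp p n g}
    (hu : ¬DivBy p n g 1 u) (hw : ¬DivBy p n g 1 w) : InOrbit p n g u w := by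
  obtain ⟨z₀, hz₀⟩ := exists_isUnit_sympForm hp hn hu
  obtain ⟨z₁, hz₁⟩ := exists_isUnit_sympForm hp hn hw
  have hcommon : ∃ z, IsUnit (sympForm p n g u z) ∧ IsUnit (sympForm p n g w z) := by
    by_cases h₀ : IsUnit (sympForm p n g w z₀)
    · exact ⟨z₀, hz₀, h₀⟩
    by_cases h₁ : IsUnit (sympForm p n g u z₁)
    · exact ⟨z₁, h₁, hz₁⟩
    refine ⟨z₀ + z₁, ?_, ?_⟩
    · rw [sympForm_add_right]
      exact ZMod.isUnit_add_of_not_isUnit hp hn hz₀ h₁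
    · rw [sympForm_add_right, add_comm]
      exact ZMod.isUnit_add_of_not_isUnit hp hn hz₁ h₀
  obtain ⟨z, huz, hwz⟩ := hcommon
  exact (inOrbit_of_isUnit_sympForm huz).trans (inOrbit_of_isUnit_sympForm hwz).symm

lemma divBy_iff_exists_smul {r : ℕ} {k : Ksymp p n g} :
    DivBy p n g r k ↔ ∃ u, k = (p : ZMod (p ^ n)) ^ r • u := by
  constructor
  · rintro ⟨h₁, h₂⟩
    choose c₁ hc₁ using h₁
    choose c₂ hc₂ using h₂
    exact ⟨(c₁, c₂), Prod.ext (funext hc₁) (funext hc₂)⟩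
  · rintro ⟨u, rfl⟩
    exact ⟨fun i => dvd_mul_right _ (u.1 i), fun i => dvd_mul_right _ (u.2 i)⟩

lemma divBy_zero (k : Ksymp p n g) : DivBy p n g 0 k :=
  ⟨fun _ => by simp, fun _ => by simp⟩

lemma eq_zero_of_divBy_self {k : Ksymp p n g} (h : DivBy p n g n k) : k = 0 := by
  obtain ⟨u, rfl⟩ := divBy_iff_exists_smul.mp h
  rw [← Nat.cast_pow, ZMod.natCast_self, zero_smul]

lemma divBy_map {r : ℕ} (α : AddAut (Ksymp p n g)) {k : Ksymp p n g} :
    DivBy p n g r (α k) ↔ DivBy p n g r k := by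
  simp only [divBy_iff_exists_smul]
  constructor
  · rintro ⟨u, hu⟩
    exact ⟨α.symm u, by rw [← ZMod.map_smul, ← hu, AddEquiv.symm_apply_apply]⟩
  · rintro ⟨u, rfl⟩
    exact ⟨α u, ZMod.map_smul α _ u⟩

lemma InOrbit.divBy_iff {r : ℕ} {k l : Ksymp p n g} (h : InOrbit p n g k l) :
    DivBy p n g r k ↔ DivBy p n g r l := by
  obtain ⟨α, -, rfl⟩ := h
  exact (divBy_map α).symm

lemma divBy_succ_smul_of_divBy_one {r : ℕ} {u : Ksymp p n g} (h : DivBy p n g 1 u) :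
    DivBy p n g (r + 1) ((p : ZMod (p ^ n)) ^ r • u) := by
  obtain ⟨v, rfl⟩ := divBy_iff_exists_smul.mp h
  exact divBy_iff_exists_smul.mpr ⟨v, by rw [smul_smul, ← pow_add]⟩

lemma orbitRep_eq_smul (r : ℕ) :
    orbitRep p n g r = (p : ZMod (p ^ n)) ^ r • orbitRep p n g 0 := by
  ext i
  · simp only [orbitRep, Prod.smul_fst, Pi.smul_apply, smul_eq_mul]
    split_ifs <;> simp
  · simp [orbitRep]

lemma orbitRep_self : orbitRep p n g n = 0 := by
  rw [orbitRep_eq_smul, ← Nat.cast_pow, ZMod.natCast_self, zero_smul]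

lemma divBy_orbitRep {r s : ℕ} (h : s ≤ r) : DivBy p n g s (orbitRep p n g r) := by
  refine divBy_iff_exists_smul.mpr ⟨(p : ZMod (p ^ n)) ^ (r - s) • orbitRep p n g 0, ?_⟩
  rw [orbitRep_eq_smul, smul_smul, ← pow_add, Nat.add_sub_cancel' h]

lemma not_divBy_succ_orbitRep (hp : p.Prime) (hg : 1 ≤ g) {r : ℕ} (hr : r < n) :
    ¬DivBy p n g (r + 1) (orbitRep p n g r) := fun h => by
  have := ZMod.le_of_prime_pow_dvd_pow hp hr (by simpa [orbitRep] using h.1 ⟨0, hg⟩)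
  omega

lemma inOrbit_orbitRep_of_divBy (hp : p.Prime) (hg : 1 ≤ g) {r : ℕ} (hr : r < n)
    {k : Ksymp p n g} (h₁ : DivBy p n g r k) (h₂ : ¬DivBy p n g (r + 1) k) :
    InOrbit p n g (orbitRep p n g r) k := by
  obtain ⟨u, rfl⟩ := divBy_iff_exists_smul.mp h₁
  have hu : ¬DivBy p n g 1 u := fun h => h₂ (divBy_succ_smul_of_divBy_one h)
  have hrep : ¬DivBy p n g 1 (orbitRep p n g 0) :=
    not_divBy_succ_orbitRep hp hg (Nat.zero_lt_of_lt hr)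
  rw [orbitRep_eq_smul]
  exact (inOrbit_of_not_divBy_one hp (by omega) hrep hu).smul _

lemma inOrbit_orbitRep_iff (hp : p.Prime) (hg : 1 ≤ g) {r : ℕ} (hr : r ≤ n)
    (k : Ksymp p n g) : InOrbit p n g (orbitRep p n g r) k ↔
      DivBy p n g r k ∧ (r = n ∨ ¬DivBy p n g (r + 1) k) := by
  constructor
  · intro h
    refine ⟨h.divBy_iff.mp (divBy_orbitRep le_rfl), hr.eq_or_lt.imp id fun hlt hk => ?_⟩
    exact not_divBy_succ_orbitRep hp hg hlt (h.divBy_iff.mpr hk)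
  · rintro ⟨h₁, h₂⟩
    rcases hr.lt_or_eq with hlt | rfl
    · exact inOrbit_orbitRep_of_divBy hp hg hlt h₁ (h₂.resolve_left hlt.ne)
    · rw [eq_zero_of_divBy_self h₁, orbitRep_self]
      exact InOrbit.refl 0

lemma exists_inOrbit_orbitRep (hp : p.Prime) (hg : 1 ≤ g) (k : Ksymp p n g) :
    ∃ r ≤ n, InOrbit p n g (orbitRep p n g r) k := by
  classical
  set r := Nat.findGreatest (DivBy p n g · k) n
  have hr : r ≤ n := Nat.findGreatest_le n
  refine ⟨r, hr, (inOrbit_orbitRep_iff hp hg hr k).mpr ⟨?_, ?_⟩⟩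
  · exact Nat.findGreatest_spec (P := (DivBy p n g · k)) (Nat.zero_le n) (divBy_zero k)
  · exact hr.eq_or_lt.imp id fun hlt => Nat.findGreatest_is_greatest (Nat.lt_succ_self r) hlt

lemma le_of_inOrbit_orbitRep (hp : p.Prime) (hg : 1 ≤ g) {r s : ℕ} (hr : r ≤ n) (hs : s ≤ n)
    (h : InOrbit p n g (orbitRep p n g r) (orbitRep p n g s)) : s ≤ r := by
  by_contra! hrs
  rcases ((inOrbit_orbitRep_iff hp hg hr _).mp h).2 with rfl | hnot
  · omega
  · exact hnot (divBy_orbitRep hrs)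

end

theorem symplectic_orbits (hp : p.Prime) (hg : 1 ≤ g) :
    (∀ k : Ksymp p n g, ∃ r ≤ n, InOrbit p n g (orbitRep p n g r) k) ∧
    (∀ r s : ℕ, r ≤ n → s ≤ n →
      InOrbit p n g (orbitRep p n g r) (orbitRep p n g s) → r = s) ∧
    (∀ r ≤ n, ∀ k : Ksymp p n g,
      InOrbit p n g (orbitRep p n g r) k ↔
        (DivBy p n g r k ∧ (r = n ∨ ¬ DivBy p n g (r + 1) k))) :=
  ⟨exists_inOrbit_orbitRep hp hg,
    fun _ _ hr hs h => le_antisymm (le_of_inOrbit_orbitRep hp hg hs hr h.symm)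
      (le_of_inOrbit_orbitRep hp hg hr hs h),
    fun _ hr => inOrbit_orbitRep_iff hp hg hr⟩
end
end

section
/- Let p be an odd prime, A = (ℤ/pⁿℤ)^g, K = A × Â ≅ (ℤ/pⁿℤ)^{2g}, and for r = 0,…,n define Δ_r = Σ_{k ∈ p^r K} 𝒲_k, where 𝒲_k are the normalized Weyl operators on L²(A). Then for all r, s ∈ {0,…,n}: Δ_r Δ_s = p^{2g(n − max{r,s})} Δ_{max{min{r,s}, n − max{r,s}}}. In particular the algebra spanned by Δ_0,…,Δ_n is commutative. -/
/-!
With `ω` the symplectic form on `K`, the normalized Weyl operators multiply as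
`𝒲_k 𝒲_l = ψ(ω(k, l)/2) 𝒲_{k+l}`. Hence the coefficient of `𝒲_m` in `Δ_r Δ_s` is the sum of
the character `l ↦ ψ(ω(m, l)/2)` over those `l ∈ p^s K` with `m - l ∈ p^r K`. If `r ≤ s`, the
condition on `m - l` is just `m ∈ p^r K`, and a character sum over the subgroup `p^s K` is
`|p^s K| = p^{2g(n-s)}` when the character is trivial on it, i.e. when `m` lies in the annihilator
`p^{n-s} K`, and `0` otherwise. If `s ≤ r`, the substitution `l = m - k` reduces to the same sum
over `k ∈ p^r K`.
-/

noncomputable section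
open scoped Classical Real

variable (p n g : ℕ) [NeZero (p ^ n)]

/-- `K ≅ (ℤ/pⁿℤ)^{2g}`, identifying `Â` with `A = (ℤ/pⁿℤ)^g` via
`χ_y(x) = exp(2πi x·y/pⁿ)`. -/
abbrev KZ := (Fin g → ZMod (p ^ n)) × (Fin g → ZMod (p ^ n))

/-- The standard character `ψ(t) = exp(2πi t/pⁿ)` of `ℤ/pⁿℤ`. -/
def psi (t : ZMod (p ^ n)) : ℂ :=
  Complex.exp (2 * π * Complex.I * t.val / (p ^ n))

/-- The normalized Weyl operator `𝒲_{(x, χ_y)}` on `L²((ℤ/pⁿℤ)^g)`: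
`(𝒲_{(x,χ_y)} f)(u) = ψ((u − x/2)·y) f(u − x)`, where `x/2 = 2⁻¹ x`. -/
def NWeylZ (k : KZ p n g) : Module.End ℂ ((Fin g → ZMod (p ^ n)) → ℂ) where
  toFun f := fun u =>
    psi p n (∑ i, (u i - (2⁻¹ : ZMod (p ^ n)) * k.1 i) * k.2 i) * f (u - k.1)
  map_add' f h := by funext u; simp [mul_add]
  map_smul' c f := by funext u; simp [smul_eq_mul]; ring

/-- All entries of `k` are divisible by `p^r`, i.e. `k ∈ p^r K`. -/
def DivByZ (r : ℕ) (k : KZ p n g) : Prop :=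
  (∀ i, (p : ZMod (p ^ n)) ^ r ∣ k.1 i) ∧ (∀ i, (p : ZMod (p ^ n)) ^ r ∣ k.2 i)

/-- `Δ_r = Σ_{k ∈ p^r K} 𝒲_k`. -/
def Delta (r : ℕ) : Module.End ℂ ((Fin g → ZMod (p ^ n)) → ℂ) :=
  ∑ k : KZ p n g, if DivByZ p n g r k then NWeylZ p n g k else 0

open Finset

theorem ZMod.natCast_mul_eq_zero_iff_dvd {N d e : ℕ} [NeZero N] (hde : d * e = N)
    (c : ZMod N) : (d : ZMod N) * c = 0 ↔ (e : ZMod N) ∣ c := by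
  constructor
  · intro h
    have hd : 0 < d := Nat.pos_of_ne_zero fun hd => NeZero.ne N (by rw [← hde, hd, zero_mul])
    rw [← ZMod.natCast_zmod_val c, ← Nat.cast_mul, ZMod.natCast_eq_zero_iff] at h
    obtain ⟨v, hv⟩ := Nat.dvd_of_mul_dvd_mul_left (m := e) (n := c.val) hd (by rwa [hde])
    exact ⟨v, by rw [← ZMod.natCast_zmod_val c, hv, Nat.cast_mul]⟩
  · rintro ⟨v, rfl⟩
    rw [← mul_assoc, ← Nat.cast_mul, hde, ZMod.natCast_self, zero_mul]

theorem ZMod.natCast_dvd_iff_mem_zmultiples {N : ℕ} (d : ℕ) (t : ZMod N) :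
    (d : ZMod N) ∣ t ↔ t ∈ AddSubgroup.zmultiples (d : ZMod N) := by
  rw [AddSubgroup.mem_zmultiples_iff]
  constructor
  · rintro ⟨c, rfl⟩
    exact ⟨c.cast, by rw [zsmul_eq_mul, ZMod.intCast_zmod_cast, mul_comm]⟩
  · rintro ⟨k, rfl⟩
    exact ⟨k, by rw [zsmul_eq_mul, mul_comm]⟩

theorem ZMod.card_natCast_dvd {N d e : ℕ} [NeZero N] (hde : d * e = N) :
    #{t : ZMod N | (d : ZMod N) ∣ t} = e := by
  have hd : 0 < d := Nat.pos_of_ne_zero fun hd => NeZero.ne N (by rw [← hde, hd, zero_mul])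
  rw [← Fintype.card_subtype, ← Nat.card_eq_fintype_card,
    Nat.card_congr (Equiv.subtypeEquivRight (ZMod.natCast_dvd_iff_mem_zmultiples d)),
    Nat.card_zmultiples, ZMod.addOrderOf_coe _ (NeZero.ne N), ← hde, Nat.gcd_mul_right_left,
    Nat.mul_div_cancel_left _ hd]

theorem AddChar.sum_mem_addSubgroup_eq_ite {G R : Type*} [AddCommGroup G] [Fintype G] [CommRing R]
    [IsDomain R] (ψ : AddChar G R) (H : AddSubgroup G) :
    ∑ x with x ∈ H, ψ x = if ∀ x ∈ H, ψ x = 1 then (#{x | x ∈ H} : R) else 0 := by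
  rw [Finset.sum_subtype (p := (· ∈ H)) _ (fun x => by simp) ψ, ← Fintype.card_subtype]
  have htrivial : ψ.compAddMonoidHom H.subtype = 0 ↔ ∀ x ∈ H, ψ x = 1 := by
    simp [AddChar.ext_iff]
  exact (ψ.compAddMonoidHom H.subtype).sum_eq_ite.trans (if_congr htrivial rfl rfl)

lemma psi_eq_stdAddChar (t : ZMod (p ^ n)) : psi p n t = ZMod.stdAddChar t := by
  rw [psi, ZMod.stdAddChar_apply, ZMod.toCircle_apply]
  push_cast
  rfl

lemma psi_add (a b : ZMod (p ^ n)) : psi p n (a + b) = psi p n a * psi p n b := by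
  simp only [psi_eq_stdAddChar, AddChar.map_add_eq_mul]

lemma psi_eq_one_iff (t : ZMod (p ^ n)) : psi p n t = 1 ↔ t = 0 := by
  rw [psi_eq_stdAddChar, ← AddChar.map_zero_eq_one (ZMod.stdAddChar (N := p ^ n)),
    ZMod.injective_stdAddChar.eq_iff]

omit [NeZero (p ^ n)] in
lemma two_mul_inv_two (hodd : Odd p) : (2 : ZMod (p ^ n)) * 2⁻¹ = 1 :=
  ZMod.mul_inv_of_unit _ <| by
    exact_mod_cast (ZMod.isUnit_iff_coprime 2 (p ^ n)).2 (Nat.coprime_two_left.2 hodd.pow)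

-- Minus the form in the paper's cocycle `c̃`: this is the sign that `NWeylZ` forces (see
-- `NWeylZ_mul`); only the annihilators of the form matter below.
def symplecticForm : KZ p n g →+ KZ p n g →+ ZMod (p ^ n) :=
  AddMonoidHom.mk'
    (fun k => AddMonoidHom.mk' (fun l => l.1 ⬝ᵥ k.2 - k.1 ⬝ᵥ l.2) fun l l' => by
      simp only [Prod.fst_add, Prod.snd_add, add_dotProduct, dotProduct_add]; ring)
    fun k k' => by
      ext l
      simp only [AddMonoidHom.mk'_apply, AddMonoidHom.add_apply, Prod.fst_add, Prod.snd_add,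
        add_dotProduct, dotProduct_add]
      ring

omit [NeZero (p ^ n)] in
lemma symplecticForm_apply (k l : KZ p n g) :
    symplecticForm p n g k l = l.1 ⬝ᵥ k.2 - k.1 ⬝ᵥ l.2 := rfl

omit [NeZero (p ^ n)] in
lemma symplecticForm_self (k : KZ p n g) : symplecticForm p n g k k = 0 := by
  rw [symplecticForm_apply, dotProduct_comm, sub_self]

omit [NeZero (p ^ n)] in
lemma symplecticForm_add_left_self (k l : KZ p n g) :
    symplecticForm p n g (k + l) l = symplecticForm p n g k l := by
  rw [map_add, AddMonoidHom.add_apply, symplecticForm_self, add_zero]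

omit [NeZero (p ^ n)] in
lemma symplecticForm_sub_right_self (m k : KZ p n g) :
    symplecticForm p n g m (m - k) = symplecticForm p n g (-m) k := by
  rw [map_sub, symplecticForm_self, map_neg, AddMonoidHom.neg_apply, zero_sub]

omit [NeZero (p ^ n)] in
lemma NWeylZ_apply (k : KZ p n g) (f : (Fin g → ZMod (p ^ n)) → ℂ) (u : Fin g → ZMod (p ^ n)) :
    NWeylZ p n g k f u = psi p n ((u - (2⁻¹ : ZMod (p ^ n)) • k.1) ⬝ᵥ k.2) * f (u - k.1) := rfl

theorem NWeylZ_mul (hodd : Odd p) (k l : KZ p n g) :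
    NWeylZ p n g k * NWeylZ p n g l =
      psi p n (2⁻¹ * symplecticForm p n g k l) • NWeylZ p n g (k + l) := by
  refine LinearMap.ext fun f => funext fun u => ?_
  simp only [Module.End.mul_apply, LinearMap.smul_apply, Pi.smul_apply, smul_eq_mul, NWeylZ_apply,
    Prod.fst_add, Prod.snd_add]
  rw [← mul_assoc, ← mul_assoc, ← psi_add, ← psi_add, sub_sub u k.1 l.1]
  congr 2
  simp only [symplecticForm_apply, sub_dotProduct, add_dotProduct, dotProduct_add, smul_dotProduct,
    smul_add, smul_eq_mul]
  linear_combination (k.1 ⬝ᵥ l.2) * two_mul_inv_two p n hodd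

lemma pow_mul_eq_zero_iff_dvd {a : ℕ} (ha : a ≤ n) (c : ZMod (p ^ n)) :
    (p : ZMod (p ^ n)) ^ a * c = 0 ↔ (p : ZMod (p ^ n)) ^ (n - a) ∣ c := by
  exact_mod_cast ZMod.natCast_mul_eq_zero_iff_dvd (pow_mul_pow_sub p ha) c

lemma card_pow_dvd {a : ℕ} (ha : a ≤ n) :
    #{t : ZMod (p ^ n) | (p : ZMod (p ^ n)) ^ a ∣ t} = p ^ (n - a) := by
  exact_mod_cast ZMod.card_natCast_dvd (pow_mul_pow_sub p ha)

lemma mul_eq_zero_of_pow_dvd {a : ℕ} (ha : a ≤ n) {x y : ZMod (p ^ n)}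
    (hx : (p : ZMod (p ^ n)) ^ a ∣ x) (hy : (p : ZMod (p ^ n)) ^ (n - a) ∣ y) : x * y = 0 := by
  obtain ⟨u, rfl⟩ := hx
  rw [mul_assoc, pow_mul_eq_zero_iff_dvd p n ha]
  exact dvd_mul_of_dvd_right hy u

omit [NeZero (p ^ n)] in
lemma pow_dvd_single (a : ℕ) (i j : Fin g) :
    (p : ZMod (p ^ n)) ^ a ∣ (Pi.single i ((p : ZMod (p ^ n)) ^ a) : Fin g → ZMod (p ^ n)) j := by
  by_cases h : j = i <;> simp [h]

def divBySubgroup (a : ℕ) : AddSubgroup (KZ p n g) where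
  carrier := {k | DivByZ p n g a k}
  add_mem' hk hl := ⟨fun i => dvd_add (hk.1 i) (hl.1 i), fun i => dvd_add (hk.2 i) (hl.2 i)⟩
  zero_mem' := ⟨fun _ => dvd_zero _, fun _ => dvd_zero _⟩
  neg_mem' hk := ⟨fun i => dvd_neg.2 (hk.1 i), fun i => dvd_neg.2 (hk.2 i)⟩

omit [NeZero (p ^ n)] in
lemma mem_divBySubgroup {a : ℕ} {k : KZ p n g} : k ∈ divBySubgroup p n g a ↔ DivByZ p n g a k :=
  Iff.rfl

omit [NeZero (p ^ n)] in
lemma divBySubgroup_antitone : Antitone (divBySubgroup p n g) := fun _ _ hab _ hk =>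
  ⟨fun i => (pow_dvd_pow _ hab).trans (hk.1 i), fun i => (pow_dvd_pow _ hab).trans (hk.2 i)⟩

omit [NeZero (p ^ n)] in
lemma divBySubgroup_max (a b : ℕ) :
    divBySubgroup p n g (max a b) = divBySubgroup p n g a ⊓ divBySubgroup p n g b := by
  rcases le_total a b with h | h
  · rw [max_eq_right h, inf_eq_right.2 (divBySubgroup_antitone p n g h)]
  · rw [max_eq_left h, inf_eq_left.2 (divBySubgroup_antitone p n g h)]

lemma card_divBySubgroup {a : ℕ} (ha : a ≤ n) :
    #{k | k ∈ divBySubgroup p n g a} = p ^ (2 * g * (n - a)) := by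
  set D : Finset (ZMod (p ^ n)) := {t | (p : ZMod (p ^ n)) ^ a ∣ t}
  have hprod : ({k | k ∈ divBySubgroup p n g a} : Finset (KZ p n g)) =
      Fintype.piFinset (fun _ => D) ×ˢ Fintype.piFinset (fun _ => D) := by
    ext k
    simp [D, mem_divBySubgroup, DivByZ, Fintype.mem_piFinset]
  rw [hprod, card_product, Fintype.card_piFinset, card_pow_dvd p n ha, prod_const, card_univ,
    Fintype.card_fin, ← pow_mul, ← pow_add]
  ring_nf

lemma psi_symplecticForm_eq_one_iff (hodd : Odd p) {a : ℕ} (ha : a ≤ n) (m : KZ p n g) :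
    (∀ l ∈ divBySubgroup p n g a, psi p n (2⁻¹ * symplecticForm p n g m l) = 1) ↔
      m ∈ divBySubgroup p n g (n - a) := by
  have hunit : IsUnit (2⁻¹ : ZMod (p ^ n)) :=
    IsUnit.of_mul_eq_one_right _ (two_mul_inv_two p n hodd)
  simp only [psi_eq_one_iff, hunit.mul_right_eq_zero, symplecticForm_apply]
  constructor
  · intro h
    refine ⟨fun i => ?_, fun i => ?_⟩
    · have hi := h (0, Pi.single i ((p : ZMod (p ^ n)) ^ a))
        ⟨fun _ => dvd_zero _, pow_dvd_single p n g a i⟩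
      rw [← pow_mul_eq_zero_iff_dvd p n ha, mul_comm]
      simpa [dotProduct_single] using hi
    · have hi := h (Pi.single i ((p : ZMod (p ^ n)) ^ a), 0)
        ⟨pow_dvd_single p n g a i, fun _ => dvd_zero _⟩
      rw [← pow_mul_eq_zero_iff_dvd p n ha]
      simpa [single_dotProduct] using hi
  · intro hm l hl
    have h1 : l.1 ⬝ᵥ m.2 = 0 :=
      sum_eq_zero fun i _ => mul_eq_zero_of_pow_dvd p n ha (hl.1 i) (hm.2 i)
    have h2 : m.1 ⬝ᵥ l.2 = 0 :=
      sum_eq_zero fun i _ => (mul_comm _ _).trans (mul_eq_zero_of_pow_dvd p n ha (hl.2 i) (hm.1 i))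
    rw [h1, h2, sub_zero]

lemma sum_psi_symplecticForm (hodd : Odd p) {a : ℕ} (ha : a ≤ n) (m : KZ p n g) :
    ∑ l with l ∈ divBySubgroup p n g a, psi p n (2⁻¹ * symplecticForm p n g m l) =
      if m ∈ divBySubgroup p n g (n - a) then (p : ℂ) ^ (2 * g * (n - a)) else 0 := by
  have hsum := (ZMod.stdAddChar.compAddMonoidHom
    ((AddMonoidHom.mulLeft 2⁻¹).comp (symplecticForm p n g m))).sum_mem_addSubgroup_eq_ite
      (divBySubgroup p n g a)
  simp only [AddChar.compAddMonoidHom_apply, AddMonoidHom.comp_apply, AddMonoidHom.coe_mulLeft,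
    ← psi_eq_stdAddChar] at hsum
  refine hsum.trans (if_congr (psi_symplecticForm_eq_one_iff p n g hodd ha m) ?_ rfl)
  rw [card_divBySubgroup p n g ha]
  push_cast
  rfl

lemma Delta_mul_Delta (hodd : Odd p) (r s : ℕ) :
    Delta p n g r * Delta p n g s =
      ∑ m, (∑ l with m - l ∈ divBySubgroup p n g r ∧ l ∈ divBySubgroup p n g s,
        psi p n (2⁻¹ * symplecticForm p n g m l)) • NWeylZ p n g m := by
  calc Delta p n g r * Delta p n g s
      = ∑ l, ∑ k, if k ∈ divBySubgroup p n g r ∧ l ∈ divBySubgroup p n g s then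
          psi p n (2⁻¹ * symplecticForm p n g k l) • NWeylZ p n g (k + l) else 0 := by
        rw [Delta, Delta, sum_mul_sum, sum_comm]
        refine sum_congr rfl fun l _ => sum_congr rfl fun k _ => ?_
        by_cases hk : DivByZ p n g r k <;> by_cases hl : DivByZ p n g s l <;>
          simp [hk, hl, mem_divBySubgroup, NWeylZ_mul p n g hodd]
    _ = ∑ l, ∑ m, if m - l ∈ divBySubgroup p n g r ∧ l ∈ divBySubgroup p n g s then
          psi p n (2⁻¹ * symplecticForm p n g m l) • NWeylZ p n g m else 0 := by
        refine sum_congr rfl fun l _ => Fintype.sum_equiv (Equiv.addRight l) _ _ fun k => ?_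
        simp only [Equiv.coe_addRight, add_sub_cancel_right, symplecticForm_add_left_self]
    _ = _ := by
        rw [sum_comm]
        simp only [sum_filter, sum_smul, ite_smul, zero_smul]

lemma smul_Delta (c : ℂ) (a : ℕ) :
    c • Delta p n g a =
      ∑ m, (if m ∈ divBySubgroup p n g a then c else 0) • NWeylZ p n g m := by
  rw [Delta, smul_sum]
  refine sum_congr rfl fun m _ => ?_
  rw [ite_smul, zero_smul, smul_ite, smul_zero]
  rfl

lemma Delta_mul_Delta_coeff_of_le (hodd : Odd p) {r s : ℕ} (hrs : r ≤ s) (hs : s ≤ n)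
    (m : KZ p n g) :
    ∑ l with m - l ∈ divBySubgroup p n g r ∧ l ∈ divBySubgroup p n g s,
        psi p n (2⁻¹ * symplecticForm p n g m l) =
      if m ∈ divBySubgroup p n g (max r (n - s)) then (p : ℂ) ^ (2 * g * (n - s)) else 0 := by
  have hcond : ∀ l, m - l ∈ divBySubgroup p n g r ∧ l ∈ divBySubgroup p n g s ↔
      m ∈ divBySubgroup p n g r ∧ l ∈ divBySubgroup p n g s := fun l =>
    and_congr_left fun hl => by
      rw [sub_eq_add_neg,
        AddSubgroup.add_mem_cancel_right _ (neg_mem (divBySubgroup_antitone p n g hrs hl))]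
  simp_rw [hcond]
  by_cases hm : m ∈ divBySubgroup p n g r
  · simp [hm, sum_psi_symplecticForm p n g hodd hs, divBySubgroup_max]
  · simp [hm, divBySubgroup_max]

lemma Delta_mul_Delta_coeff_of_ge (hodd : Odd p) {r s : ℕ} (hsr : s ≤ r) (hr : r ≤ n)
    (m : KZ p n g) :
    ∑ l with m - l ∈ divBySubgroup p n g r ∧ l ∈ divBySubgroup p n g s,
        psi p n (2⁻¹ * symplecticForm p n g m l) =
      if m ∈ divBySubgroup p n g (max s (n - r)) then (p : ℂ) ^ (2 * g * (n - r)) else 0 := by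
  have hreindex : ∑ l with m - l ∈ divBySubgroup p n g r ∧ l ∈ divBySubgroup p n g s,
      psi p n (2⁻¹ * symplecticForm p n g m l) =
      ∑ k with m ∈ divBySubgroup p n g s ∧ k ∈ divBySubgroup p n g r,
        psi p n (2⁻¹ * symplecticForm p n g (-m) k) := by
    refine (sum_equiv (Equiv.subLeft m) (fun k => ?_) (fun k _ => ?_)).symm
    · simp only [mem_filter, mem_univ, true_and, Equiv.subLeft_apply, sub_sub_cancel]
      refine ⟨fun ⟨hm, hk⟩ => ⟨hk, sub_mem hm (divBySubgroup_antitone p n g hsr hk)⟩,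
        fun ⟨hk, hmk⟩ => ⟨?_, hk⟩⟩
      simpa using add_mem hmk (divBySubgroup_antitone p n g hsr hk)
    · rw [Equiv.subLeft_apply, symplecticForm_sub_right_self]
  rw [hreindex]
  by_cases hm : m ∈ divBySubgroup p n g s
  · simp only [hm, true_and, sum_psi_symplecticForm p n g hodd hr, neg_mem_iff, divBySubgroup_max,
      AddSubgroup.mem_inf]
  · simp [hm, divBySubgroup_max]

theorem Delta_mul (hodd : Odd p) :
    (∀ r ≤ n, ∀ s ≤ n,
      Delta p n g r * Delta p n g s =
        ((p : ℂ) ^ (2 * g * (n - max r s))) •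
          Delta p n g (max (min r s) (n - max r s))) ∧
    (∀ r ≤ n, ∀ s ≤ n,
      Delta p n g r * Delta p n g s = Delta p n g s * Delta p n g r) := by
  have hmul : ∀ r ≤ n, ∀ s ≤ n, Delta p n g r * Delta p n g s =
      ((p : ℂ) ^ (2 * g * (n - max r s))) • Delta p n g (max (min r s) (n - max r s)) := by
    intro r hr s hs
    rw [Delta_mul_Delta p n g hodd, smul_Delta]
    refine sum_congr rfl fun m _ => congrArg (· • NWeylZ p n g m) ?_
    rcases le_total r s with h | h
    · rw [max_eq_right h, min_eq_left h]
      exact Delta_mul_Delta_coeff_of_le p n g hodd h hs m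
    · rw [max_eq_left h, min_eq_right h]
      exact Delta_mul_Delta_coeff_of_ge p n g hodd h hr m
  exact ⟨hmul, fun r hr s hs => by rw [hmul r hr s hs, hmul s hs r hr, max_comm, min_comm]⟩
end
end
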